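/- Density factorization identity: with Δ = Σ^{1/2} λ / √(1+λᵀλ), Γ = Σ - ΔΔᵀ, μ_b = τ̃ Δ, and τ̃ = τ/√(1+λᵀλ), for all x ∈ ℝ^p, φ₁(τ + λᵀ Σ^{-1/2}(x - μ)) · φ_p(x; μ, Σ) = φ₁(τ; 0, 1 + λᵀλ) · φ_p(x; μ - μ_b, Γ), where φ₁(t; m, v) denotes the univariate normal density with mean m and variance v and φ₁(t) = φ₁(t; 0, 1). -/

import Mathlib

/-! With `α = Σ^{-1/2} λ` and `s = √(1 + λᵀλ)` one has `λᵀ Σ^{-1/2} (x - μ) = αᵀ (x - μ)`,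
`s² = 1 + αᵀ Σ α` and `Σ α = s Δ`. For such data `Γ = Σ - ΔΔᵀ` has inverse `Σ⁻¹ + ααᵀ`
(Sherman–Morrison) and determinant `det Σ / s²` (matrix determinant lemma). Completing the square,
`(d + (τ/s)Δ)ᵀ Γ⁻¹ (d + (τ/s)Δ) + τ²/s² = dᵀ Σ⁻¹ d + (τ + αᵀd)²` for `d = x - μ`, so the exponents
of both sides agree; the normalising constants agree because `s² · (det Σ / s²) = det Σ`. -/

open MeasureTheory Real Matrix Filter

/-- Standard normal cdf Φ. -/
noncomputable def stdCDF (t : ℝ) : ℝ :=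
  ∫ x in Set.Iic t, ProbabilityTheory.gaussianPDFReal 0 1 x

/-- Univariate normal density with mean `m` and variance `v`. -/
noncomputable def normPDF (m v x : ℝ) : ℝ :=
  (Real.sqrt (2 * π * v))⁻¹ * Real.exp (-((x - m) ^ 2 / (2 * v)))

/-- Multivariate normal density with mean `μ` and covariance `S`. -/
noncomputable def mvnPDF {n : Type*} [Fintype n] [DecidableEq n] (μ : n → ℝ) (S : Matrix n n ℝ)
    (x : n → ℝ) : ℝ :=
  (2 * π) ^ (-(Fintype.card n : ℝ) / 2) * S.det ^ (-(1 : ℝ) / 2) *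
    Real.exp (-(dotProduct (x - μ) (S⁻¹ *ᵥ (x - μ))) / 2)

/-- Square root of a positive semidefinite matrix (the old `Matrix.PosSemidef.sqrt`). -/
noncomputable def posSemidefSqrt {n : Type*} [Fintype n] [DecidableEq n] {A : Matrix n n ℝ}
    (hA : A.PosSemidef) : Matrix n n ℝ :=
  (hA.1.eigenvectorUnitary : Matrix n n ℝ) * diagonal ((↑) ∘ Real.sqrt ∘ hA.1.eigenvalues) *
    (star hA.1.eigenvectorUnitary : Matrix n n ℝ)

/-- Extended skew-normal density. -/
noncomputable def esnPDF {n : Type*} [Fintype n] [DecidableEq n] (μ : n → ℝ)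
    (S : Matrix n n ℝ) (hS : S.PosDef) (l : n → ℝ) (τ : ℝ) (y : n → ℝ) : ℝ :=
  (stdCDF (τ / Real.sqrt (1 + dotProduct l l)))⁻¹ * mvnPDF μ S y *
    stdCDF (τ + dotProduct l ((posSemidefSqrt hS.posSemidef)⁻¹ *ᵥ (y - μ)))

section

variable {n : Type*} [Fintype n] {S : Matrix n n ℝ} {α Δ : n → ℝ} {s : ℝ}

lemma dotProduct_eq_sub_inv_of_mulVec_eq (hs : s ≠ 0) (hs2 : s ^ 2 = 1 + α ⬝ᵥ S *ᵥ α)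
    (hSα : S *ᵥ α = s • Δ) : α ⬝ᵥ Δ = s - s⁻¹ := by
  rw [hSα, dotProduct_smul, smul_eq_mul] at hs2
  field_simp
  linarith

variable [DecidableEq n]

lemma det_one_sub_vecMulVec {R : Type*} [CommRing R] (u v : n → R) :
    (1 - vecMulVec u v).det = 1 - v ⬝ᵥ u := by
  rw [sub_eq_add_neg, ← neg_vecMulVec, vecMulVec_eq Unit,
    det_one_add_replicateCol_mul_replicateRow, dotProduct_neg, ← sub_eq_add_neg]

lemma det_sub_vecMulVec_of_mulVec_eq (hs : s ≠ 0) (hs2 : s ^ 2 = 1 + α ⬝ᵥ S *ᵥ α)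
    (hSα : S *ᵥ α = s • Δ) : (S - vecMulVec Δ Δ).det = S.det / s ^ 2 := by
  have hfactor : S - vecMulVec Δ Δ = S * (1 - vecMulVec (s⁻¹ • α) Δ) := by
    rw [Matrix.mul_sub, Matrix.mul_one, mul_vecMulVec, mulVec_smul, hSα, inv_smul_smul₀ hs]
  rw [hfactor, det_mul, det_one_sub_vecMulVec, dotProduct_smul, smul_eq_mul, dotProduct_comm,
    dotProduct_eq_sub_inv_of_mulVec_eq hs hs2 hSα]
  field_simp
  ring

lemma inv_mulVec_of_mulVec_eq (hdet : IsUnit S.det) (hs : s ≠ 0) (hSα : S *ᵥ α = s • Δ) :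
    S⁻¹ *ᵥ Δ = s⁻¹ • α := by
  rw [← inv_smul_smul₀ hs Δ, ← hSα, mulVec_smul, mulVec_mulVec, nonsing_inv_mul _ hdet,
    one_mulVec]

lemma vecMul_inv_of_mulVec_eq (hS : S.IsSymm) (hdet : IsUnit S.det) (hs : s ≠ 0)
    (hSα : S *ᵥ α = s • Δ) : Δ ᵥ* S⁻¹ = s⁻¹ • α := by
  rw [← mulVec_transpose, transpose_nonsing_inv, hS.eq, inv_mulVec_of_mulVec_eq hdet hs hSα]

/-- Sherman–Morrison: here `S⁻¹ Δ = s⁻¹ α` and `1 - Δᵀ S⁻¹ Δ = s⁻²`. -/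
lemma inv_sub_vecMulVec_of_mulVec_eq (hS : S.IsSymm) (hdet : IsUnit S.det) (hs : s ≠ 0)
    (hs2 : s ^ 2 = 1 + α ⬝ᵥ S *ᵥ α) (hSα : S *ᵥ α = s • Δ) :
    (S - vecMulVec Δ Δ)⁻¹ = S⁻¹ + vecMulVec α α := by
  apply inv_eq_right_inv
  rw [Matrix.sub_mul, Matrix.mul_add, Matrix.mul_add, mul_nonsing_inv _ hdet, mul_vecMulVec, hSα,
    vecMulVec_mul, vecMul_inv_of_mulVec_eq hS hdet hs hSα, vecMulVec_mul_vecMulVec,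
    dotProduct_comm, dotProduct_eq_sub_inv_of_mulVec_eq hs hs2 hSα,
    smul_vecMulVec, vecMulVec_smul, vecMulVec_smul]
  module

lemma dotProduct_inv_sub_vecMulVec_mulVec (hS : S.IsSymm) (hdet : IsUnit S.det) (hs : s ≠ 0)
    (hs2 : s ^ 2 = 1 + α ⬝ᵥ S *ᵥ α) (hSα : S *ᵥ α = s • Δ) (d : n → ℝ) (τ : ℝ) :
    (d + (τ / s) • Δ) ⬝ᵥ (S - vecMulVec Δ Δ)⁻¹ *ᵥ (d + (τ / s) • Δ) + τ ^ 2 / s ^ 2 =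
      d ⬝ᵥ S⁻¹ *ᵥ d + (τ + α ⬝ᵥ d) ^ 2 := by
  have hαΔ := dotProduct_eq_sub_inv_of_mulVec_eq hs hs2 hSα
  have hΔd : Δ ⬝ᵥ S⁻¹ *ᵥ d = s⁻¹ * α ⬝ᵥ d := by
    rw [dotProduct_mulVec, vecMul_inv_of_mulVec_eq hS hdet hs hSα, smul_dotProduct, smul_eq_mul]
  rw [inv_sub_vecMulVec_of_mulVec_eq hS hdet hs hs2 hSα]
  simp only [add_mulVec, mulVec_add, mulVec_smul, vecMulVec_mulVec, op_smul_eq_smul,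
    inv_mulVec_of_mulVec_eq hdet hs hSα, dotProduct_add, add_dotProduct, dotProduct_smul,
    smul_dotProduct, smul_eq_mul, hΔd, hαΔ, dotProduct_comm Δ α, dotProduct_comm d α]
  field_simp
  ring

lemma inv_sqrt_two_pi_mul_det_rpow (D : ℝ) (hD : 0 ≤ D) (hs : 0 < s) :
    (√(2 * π * s ^ 2))⁻¹ * (D / s ^ 2) ^ (-(1 : ℝ) / 2) =
      (√(2 * π * 1))⁻¹ * D ^ (-(1 : ℝ) / 2) := by
  have hsq : (s ^ 2) ^ (-(1 : ℝ) / 2) = s⁻¹ := by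
    rw [neg_div, rpow_neg (sq_nonneg s), ← sqrt_eq_rpow, sqrt_sq hs.le]
  rw [sqrt_mul' _ (sq_nonneg s), sqrt_sq hs.le, div_rpow hD (sq_nonneg s), hsq, mul_one]
  field_simp

theorem normPDF_mul_mvnPDF (hS : S.IsSymm) (hdet : 0 < S.det) (hs : 0 < s)
    (hs2 : s ^ 2 = 1 + α ⬝ᵥ S *ᵥ α) (hSα : S *ᵥ α = s • Δ) (μ x : n → ℝ) (τ : ℝ) :
    normPDF 0 1 (τ + α ⬝ᵥ (x - μ)) * mvnPDF μ S x =
      normPDF 0 (s ^ 2) τ * mvnPDF (μ - (τ / s) • Δ) (S - vecMulVec Δ Δ) x := by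
  have hshift : x - (μ - (τ / s) • Δ) = (x - μ) + (τ / s) • Δ := by abel
  have hquad := dotProduct_inv_sub_vecMulVec_mulVec hS hdet.ne'.isUnit hs.ne' hs2 hSα (x - μ) τ
  unfold normPDF mvnPDF
  rw [det_sub_vecMulVec_of_mulVec_eq hs.ne' hs2 hSα, hshift]
  generalize (x - μ) ⬝ᵥ S⁻¹ *ᵥ (x - μ) = q at hquad ⊢
  generalize (x - μ + (τ / s) • Δ) ⬝ᵥ (S - vecMulVec Δ Δ)⁻¹ *ᵥ (x - μ + (τ / s) • Δ) = Q at hquad ⊢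
  generalize α ⬝ᵥ (x - μ) = c at hquad ⊢
  have hexp : exp (-((τ + c - 0) ^ 2 / (2 * 1))) * exp (-q / 2) =
      exp (-((τ - 0) ^ 2 / (2 * s ^ 2))) * exp (-Q / 2) := by
    rw [← exp_add, ← exp_add]
    congr 1
    linear_combination hquad / 2
  linear_combination (2 * π) ^ (-(Fintype.card n : ℝ) / 2) *
    congr($((inv_sqrt_two_pi_mul_det_rpow S.det hdet.le hs).symm) * $hexp)

end

section

variable {n : Type*} [Fintype n] [DecidableEq n] {A : Matrix n n ℝ}

lemma posSemidefSqrt_mul_self (hA : A.PosSemidef) : posSemidefSqrt hA * posSemidefSqrt hA = A := by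
  unfold posSemidefSqrt
  conv_rhs => rw [hA.1.spectral_theorem, Unitary.conjStarAlgAut_apply]
  have hU : (star hA.1.eigenvectorUnitary : Matrix n n ℝ) * hA.1.eigenvectorUnitary = 1 :=
    Unitary.coe_star_mul_self _
  simp only [Matrix.mul_assoc]
  rw [← Matrix.mul_assoc (star _ : Matrix n n ℝ), hU, Matrix.one_mul]
  simp only [← Matrix.mul_assoc, diagonal_mul_diagonal]
  congr 3
  funext i
  simp [Real.mul_self_sqrt (hA.eigenvalues_nonneg i)]

lemma posSemidefSqrt_isSymm (hA : A.PosSemidef) : (posSemidefSqrt hA).IsSymm := by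
  unfold posSemidefSqrt Matrix.IsSymm
  rw [← conjTranspose_eq_transpose_of_trivial]
  simp [Matrix.star_eq_conjTranspose, Matrix.mul_assoc]

lemma isUnit_det_posSemidefSqrt (hA : A.PosDef) : IsUnit (posSemidefSqrt hA.posSemidef).det := by
  refine isUnit_of_mul_isUnit_left (y := (posSemidefSqrt hA.posSemidef).det) ?_
  rw [← det_mul, posSemidefSqrt_mul_self]
  exact hA.det_pos.ne'.isUnit

end

/-- density factorization identity
`φ₁(τ + λᵀΣ^{-1/2}(x-μ)) φ_p(x; μ, Σ) = φ₁(τ; 0, 1+λᵀλ) φ_p(x; μ - μ_b, Γ)`. -/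
theorem esn_density_factorization {p : ℕ} (μ : Fin p → ℝ)
    (S : Matrix (Fin p) (Fin p) ℝ) (hS : S.PosDef) (l : Fin p → ℝ) (τ : ℝ)
    (Δ : Fin p → ℝ)
    (hΔ : Δ = (Real.sqrt (1 + dotProduct l l))⁻¹ • (posSemidefSqrt hS.posSemidef *ᵥ l))
    (x : Fin p → ℝ) :
    normPDF 0 1 (τ + dotProduct l ((posSemidefSqrt hS.posSemidef)⁻¹ *ᵥ (x - μ))) *
        mvnPDF μ S x =
      normPDF 0 (1 + dotProduct l l) τ *
        mvnPDF (μ - (τ / Real.sqrt (1 + dotProduct l l)) • Δ)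
          (S - Matrix.of fun i j => Δ i * Δ j) x := by
  set A := posSemidefSqrt hS.posSemidef
  have hAA : A * A = S := posSemidefSqrt_mul_self _
  have hA : A.IsSymm := posSemidefSqrt_isSymm _
  have hdetA : IsUnit A.det := isUnit_det_posSemidefSqrt hS
  set α := A⁻¹ *ᵥ l with hα
  have hAα : A *ᵥ α = l := by rw [hα, mulVec_mulVec, mul_nonsing_inv _ hdetA, one_mulVec]
  have hSα : S *ᵥ α = A *ᵥ l := by rw [← hAA, ← mulVec_mulVec, hAα]
  have hαSα : α ⬝ᵥ S *ᵥ α = l ⬝ᵥ l := by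
    rw [hSα, dotProduct_mulVec, ← mulVec_transpose, hA.eq, hAα]
  have hlα : l ⬝ᵥ A⁻¹ *ᵥ (x - μ) = α ⬝ᵥ (x - μ) := by
    rw [dotProduct_mulVec, ← mulVec_transpose, transpose_nonsing_inv, hA.eq]
  have hll : 0 ≤ l ⬝ᵥ l := Fintype.sum_nonneg fun i => mul_self_nonneg (l i)
  have hs : 0 < √(1 + l ⬝ᵥ l) := sqrt_pos.2 (by linarith)
  have hs2 : √(1 + l ⬝ᵥ l) ^ 2 = 1 + l ⬝ᵥ l := sq_sqrt (by linarith)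
  have key := normPDF_mul_mvnPDF (isHermitian_iff_isSymm.mp hS.isHermitian) hS.det_pos hs
    (by rw [hαSα, hs2]) (Δ := Δ) (by rw [hSα, hΔ, smul_inv_smul₀ hs.ne']) μ x τ
  rwa [hs2, ← hlα] at key
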